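/- The average target hitting time H_j := ∑_{i=1}^n π(i) H_{ij} satisfies the spectral formula H_j = (1/π(j)) · ∑_{k=2}^{n} v_{k,j}²/(1 − λ_k), where π(i) = d_i/(2|E|). -/

import Mathlib

/-!
Put `u i = √(d i) * H i j`. The hitting-time recursion, together with the return-time identity
`∑ k, A j k * H k j = 2|E| - d j` (Kac's formula `1 / π(j)` for the mean return time to `j`), says
`(I - B) u = √(2|E|) v₁ - (2|E| / √(d j)) e_j`. Pairing with the eigenvectors `v_k`, `k ≥ 2`, gives
`⟨v_k, u⟩ = -(2|E| / √(d j)) v_{k,j} / (1 - λ_k)`, and expanding `u j = 0` in the eigenbasis then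
determines `⟨v₁, u⟩ = √(2|E|) ∑ i, π(i) H i j`.
-/

open Matrix Finset

section OrthonormalEigenbasis

variable {ι : Type*} [Fintype ι]

theorem dotProduct_mulVec_of_isSymm_of_mulVec_eq_smul {B : Matrix ι ι ℝ} (hB : B.IsSymm)
    {w : ι → ℝ} {μ : ℝ} (hw : B *ᵥ w = μ • w) (u : ι → ℝ) :
    w ⬝ᵥ (B *ᵥ u) = μ * (w ⬝ᵥ u) := by
  rw [dotProduct_mulVec, ← mulVec_transpose, hB.eq, hw, smul_dotProduct, smul_eq_mul]

variable [DecidableEq ι]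

theorem sum_mul_eq_ite_of_orthonormal {v : ι → ι → ℝ}
    (horth : ∀ k l, ∑ x, v k x * v l x = if k = l then 1 else 0) (x y : ι) :
    ∑ k, v k x * v k y = if x = y then 1 else 0 := by
  have hrows : Matrix.of v * (Matrix.of v)ᵀ = 1 := by
    ext k l
    simp [Matrix.mul_apply, horth, Matrix.one_apply]
  have hcols : (Matrix.of v)ᵀ * Matrix.of v = 1 := mul_eq_one_comm.mp hrows
  simpa [Matrix.mul_apply, Matrix.one_apply] using congrFun (congrFun hcols x) y

theorem sum_dotProduct_mul_of_orthonormal {v : ι → ι → ℝ}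
    (horth : ∀ k l, ∑ x, v k x * v l x = if k = l then 1 else 0) (u : ι → ℝ) (x : ι) :
    ∑ k, (v k ⬝ᵥ u) * v k x = u x := by
  simp_rw [dotProduct, Finset.sum_mul]
  rw [Finset.sum_comm]
  simp_rw [mul_right_comm _ (u _), mul_comm _ (u _), ← Finset.mul_sum,
    sum_mul_eq_ite_of_orthonormal horth]
  simp

theorem dotProduct_mul_eq_of_sub_mulVec_eq {B : Matrix ι ι ℝ} (hB : B.IsSymm)
    {lam : ι → ℝ} {v : ι → ι → ℝ} (heig : ∀ k, B *ᵥ v k = lam k • v k)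
    (horth : ∀ k l, ∑ x, v k x * v l x = if k = l then 1 else 0)
    {k₀ : ι} (hlam : ∀ k ≠ k₀, lam k ≠ 1) {u f : ι → ℝ} (hu : u - B *ᵥ u = f)
    {j : ι} (huj : u j = 0) :
    (v k₀ ⬝ᵥ u) * v k₀ j = -∑ k ∈ univ.erase k₀, (v k ⬝ᵥ f) * v k j / (1 - lam k) := by
  have hcoeff : ∀ k ≠ k₀, v k ⬝ᵥ u = (v k ⬝ᵥ f) / (1 - lam k) := by
    intro k hk
    rw [eq_div_iff (sub_ne_zero.mpr (hlam k hk).symm), ← hu, dotProduct_sub,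
      dotProduct_mulVec_of_isSymm_of_mulVec_eq_smul hB (heig k)]
    ring
  have hexp := sum_dotProduct_mul_of_orthonormal horth u j
  rw [huj, ← Finset.add_sum_erase _ _ (mem_univ k₀)] at hexp
  rw [eq_neg_iff_add_eq_zero, ← hexp]
  congr 1
  refine Finset.sum_congr rfl fun k hk => ?_
  rw [hcoeff k (Finset.ne_of_mem_erase hk)]
  ring

theorem dotProduct_mul_eq_of_sub_mulVec_eq_smul_sub_single {B : Matrix ι ι ℝ} (hB : B.IsSymm)
    {lam : ι → ℝ} {v : ι → ι → ℝ} (heig : ∀ k, B *ᵥ v k = lam k • v k)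
    (horth : ∀ k l, ∑ x, v k x * v l x = if k = l then 1 else 0)
    {k₀ : ι} (hlam : ∀ k ≠ k₀, lam k ≠ 1) {u : ι → ℝ} {a c : ℝ} {j : ι}
    (hu : u - B *ᵥ u = a • v k₀ - c • Pi.single j 1) (huj : u j = 0) :
    (v k₀ ⬝ᵥ u) * v k₀ j = c * ∑ k ∈ univ.erase k₀, v k j ^ 2 / (1 - lam k) := by
  rw [dotProduct_mul_eq_of_sub_mulVec_eq hB heig horth hlam hu huj, Finset.mul_sum,
    ← Finset.sum_neg_distrib]
  refine Finset.sum_congr rfl fun k hk => ?_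
  rw [dotProduct_sub, dotProduct_smul, dotProduct_smul, dotProduct_single, dotProduct,
    horth, if_neg (Finset.ne_of_mem_erase hk)]
  simp only [smul_eq_mul, mul_zero, mul_one, zero_sub]
  ring

end OrthonormalEigenbasis

section HittingTimes

variable {ι : Type*} [Fintype ι] [DecidableEq ι] {A : Matrix ι ι ℝ} {d h : ι → ℝ} {j : ι}

theorem sum_mul_hittingTime_eq (hsym : ∀ i k, A i k = A k i) (hd : ∀ i, d i = ∑ k, A i k)
    (hdpos : ∀ i, 0 < d i) (hj : h j = 0) (hrec : ∀ i ≠ j, h i = 1 + ∑ k, A i k / d i * h k) :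
    ∑ k, A j k * h k = ∑ i, d i - d j := by
  have hrow : ∀ i ≠ j, d i * h i - ∑ k, A i k * h k = d i := by
    intro i hi
    have hcancel : ∀ k, d i * (A i k / d i * h k) = A i k * h k := fun k => by
      field_simp [(hdpos i).ne']
    rw [hrec i hi, mul_add, mul_one, Finset.mul_sum]
    simp only [hcancel]
    ring
  have hcol : ∀ k, ∑ i, A i k = d k := fun k => by
    rw [hd k]
    exact Finset.sum_congr rfl fun i _ => hsym i k
  have hbalance : ∑ i, (d i * h i - ∑ k, A i k * h k) = 0 := by
    rw [Finset.sum_sub_distrib, Finset.sum_comm]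
    simp only [← Finset.sum_mul, hcol, sub_self]
  rw [← Finset.add_sum_erase _ _ (mem_univ j),
    Finset.sum_congr rfl fun i hi => hrow i (Finset.ne_of_mem_erase hi),
    Finset.sum_erase_eq_sub (mem_univ j), hj, mul_zero] at hbalance
  linarith

theorem sqrt_mul_hittingTime_sub_mulVec_eq {B : Matrix ι ι ℝ}
    (hB : ∀ i k, B i k = A i k / (√(d i) * √(d k))) (hsym : ∀ i k, A i k = A k i)
    (hd : ∀ i, d i = ∑ k, A i k) (hdpos : ∀ i, 0 < d i) (hj : h j = 0)
    (hrec : ∀ i ≠ j, h i = 1 + ∑ k, A i k / d i * h k) :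
    (fun i => √(d i) * h i) - B *ᵥ (fun i => √(d i) * h i) =
      (fun i => √(d i)) - ((∑ i, d i) / √(d j)) • Pi.single j 1 := by
  have hsqrt : ∀ i, √(d i) ≠ 0 := fun i => (Real.sqrt_pos.2 (hdpos i)).ne'
  have hmulVec : ∀ i, (B *ᵥ fun i => √(d i) * h i) i = √(d i) * ∑ k, A i k / d i * h k := by
    intro i
    simp only [mulVec, dotProduct, hB, Finset.mul_sum]
    refine Finset.sum_congr rfl fun k _ => ?_
    field_simp [hsqrt i, hsqrt k]
    rw [Real.sq_sqrt (hdpos i).le]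
    field_simp [(hdpos i).ne']
  ext i
  simp only [Pi.sub_apply, Pi.smul_apply, hmulVec, Pi.single_apply, smul_eq_mul]
  by_cases hij : i = j
  · subst hij
    have hsum : ∑ k, A i k / d i * h k = (∑ i, d i - d i) / d i := by
      rw [← sum_mul_hittingTime_eq hsym hd hdpos hj hrec, Finset.sum_div]
      exact Finset.sum_congr rfl fun k _ => by ring
    rw [hsum, hj, if_pos rfl]
    field_simp [hsqrt i]
    rw [Real.sq_sqrt (hdpos i).le]
    field_simp [(hdpos i).ne']
    ring
  · rw [hrec i hij, if_neg hij]
    ring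

end HittingTimes

/-- The average target hitting time H_j := ∑_i π(i) H_{ij} satisfies H_j = (1/π(j)) · ∑_{k=2}^n v_{k,j}²/(1 − λ_k), where π(i) = d_i/(2|E|). -/
theorem stmt_6
    (n : ℕ) (hn : 2 ≤ n)
    (A : Matrix (Fin n) (Fin n) ℝ)
    (hsym : ∀ i j, A i j = A j i)
    (d : Fin n → ℝ) (hd : ∀ i, d i = ∑ j, A i j)
    (hdpos : ∀ i, 0 < d i)
    (twoE : ℝ) (htwoE : twoE = ∑ i, d i)
    (B : Matrix (Fin n) (Fin n) ℝ)
    (hB : ∀ i j, B i j = A i j / (Real.sqrt (d i) * Real.sqrt (d j)))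
    (lam : Fin n → ℝ) (v : Fin n → Fin n → ℝ)
    (hmono : Antitone lam)
    (heig : ∀ k, B.mulVec (v k) = lam k • v k)
    (horth : ∀ k l, (∑ x, v k x * v l x) = (if k = l then (1 : ℝ) else 0))
    (hv1 : ∀ j, v ⟨0, by omega⟩ j = Real.sqrt (d j / twoE))
    (hgap : lam ⟨1, by omega⟩ < 1)
    (H : Fin n → Fin n → ℝ)
    (hH0 : ∀ j, H j j = 0)
    (hHrec : ∀ i j, i ≠ j → H i j = 1 + ∑ k, (A i k / d i) * H k j) :
    ∀ j, (∑ i, (d i / twoE) * H i j) =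
      (twoE / d j) * ∑ k ∈ Finset.univ.filter (fun k : Fin n => k.val ≠ 0), (v k j) ^ 2 / (1 - lam k) := by
  intro j
  set k₀ : Fin n := ⟨0, by omega⟩
  set u : Fin n → ℝ := fun i => √(d i) * H i j
  have hT : 0 < twoE := htwoE ▸ Finset.sum_pos (fun i _ => hdpos i) ⟨k₀, mem_univ _⟩
  have hv₀ : ∀ i, v k₀ i = √(d i) / √twoE := fun i => by rw [hv1, Real.sqrt_div (hdpos i).le]
  have hlam : ∀ k ≠ k₀, lam k ≠ 1 := fun k hk =>
    (lt_of_le_of_lt (hmono (Fin.le_iff_val_le_val.mpr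
      (Nat.one_le_iff_ne_zero.mpr fun h => hk (Fin.ext h)))) hgap).ne
  have hu : u - B *ᵥ u = √twoE • v k₀ - (twoE / √(d j)) • Pi.single j 1 := by
    have hs : √twoE • v k₀ = fun i => √(d i) := by
      ext i
      rw [Pi.smul_apply, hv₀, smul_eq_mul, mul_div_cancel₀ _ (Real.sqrt_pos.2 hT).ne']
    rw [hs, htwoE]
    exact sqrt_mul_hittingTime_sub_mulVec_eq hB hsym hd hdpos (hH0 j) fun i hi => hHrec i j hi
  have hkey := dotProduct_mul_eq_of_sub_mulVec_eq_smul_sub_single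
    (IsSymm.ext fun i k => by rw [hB, hB, hsym, mul_comm]) heig horth hlam hu (by simp [u, hH0])
  have hlhs : ∑ i, d i / twoE * H i j = (v k₀ ⬝ᵥ u) / √twoE := by
    rw [dotProduct, Finset.sum_div]
    refine Finset.sum_congr rfl fun i _ => ?_
    simp only [u, hv₀]
    field_simp
    rw [Real.sq_sqrt (hdpos i).le, Real.sq_sqrt hT.le]
    ring
  have hfilter : univ.filter (fun k : Fin n => k.val ≠ 0) = univ.erase k₀ := by
    ext k
    simp [k₀, Fin.ext_iff]
  rw [hfilter, hlhs]
  rw [hv₀] at hkey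
  field_simp at hkey ⊢
  rw [← Real.sq_sqrt (hdpos j).le, sq, ← div_div, ← hkey]
  field_simp [(Real.sqrt_pos.2 (hdpos j)).ne']
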